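/- If a bivector field P = (1/2)P^{ab}(x)x*_b x*_a on ℝ^n satisfies the Poisson condition [P,P] = 0 for the Schouten bracket, then its canonical lift P̂ = P + t t* ∂_a P^{ab} x*_b to the Thomas bundle also satisfies [P̂,P̂] = 0. -/

import Mathlib

/-!
The components of `[P̂,P̂]` are computed index type by index type. With three base indices they
are the Jacobiator of `P`, placed in degree `t⁰`. With two base indices `i, j` and one `t` they
are `t` times the Lie derivative `(L_X P)^{ij}` of `P` along its divergence `X^b = ∂_aP^{ab}`;
contracting the derivative of the Jacobi identity gives `∂_k J^{ijk} = -(L_X P)^{ij}`, so these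
vanish as well (the divergence of a Poisson bivector is a Poisson vector field). Components with
two `t`-indices vanish by antisymmetry of `P̂` alone.
-/

noncomputable section

/- Lifting of an even Poisson structure to the Thomas bundle, in components.
`R` is a commutative ℝ-algebra (modeling `C^∞(ℝ^n)`) with commuting
derivations `D a = ∂/∂x^a`.  The algebra of densities (functions on the Thomas
bundle M̂) is `C = AddMonoidAlgebra R ℝ`, with `single λ f = f(x)t^λ`; its
coordinate directions are indexed by `Option (Fin n)` (`some a ↦ x^a`,
`none ↦ t`), with corresponding derivations `Dv`.  A bivector
`P = ½P^{ab}x*_bx*_a` is given by its antisymmetric components `P a b`, and the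
Schouten condition `[P,P] = 0` by the Jacobi identity
`Σ_l (P^{li}∂_lP^{jk} + P^{lj}∂_lP^{ki} + P^{lk}∂_lP^{ij}) = 0`.  The canonical
lift `P̂ = P + t t* ∂_aP^{ab} x*_b` has components `P̂^{ab} = P^{ab}`,
`P̂^{bt} = t Σ_a ∂_aP^{ab}`, `P̂^{tb} = −t Σ_a ∂_aP^{ab}`, `P̂^{tt} = 0`. -/

variable {R : Type*} [CommRing R] [Algebra ℝ R] {n : ℕ}

/-- The coordinate derivations on the Thomas bundle: `∂/∂x^a` and `∂/∂t`. -/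
def Dv (D : Fin n → Derivation ℝ R R) :
    Option (Fin n) → AddMonoidAlgebra R ℝ → AddMonoidAlgebra R ℝ
  | some a => fun ψ => AddMonoidAlgebra.ofCoeff (Finsupp.mapRange (D a) (map_zero _) ψ.coeff)
  | none => fun ψ => AddMonoidAlgebra.ofCoeff (Finsupp.sum ψ.coeff fun l c => Finsupp.single (l - 1) (l • c))

/-- Components of the canonical lift `P̂` of the bivector `P`. -/
def Qhat (D : Fin n → Derivation ℝ R R) (P : Fin n → Fin n → R) :
    Option (Fin n) → Option (Fin n) → AddMonoidAlgebra R ℝ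
  | some a, some b => AddMonoidAlgebra.single 0 (P a b)
  | none, some b => -AddMonoidAlgebra.single 1 (∑ a, D a (P a b))
  | some b, none => AddMonoidAlgebra.single 1 (∑ a, D a (P a b))
  | none, none => 0

open Finset AddMonoidAlgebra

section Bivector

variable {ι S A : Type*} [Fintype ι] [CommRing S] [CommRing A] [Algebra S A]

def jacobiator (d : ι → A →+ A) (Q : ι → ι → A) (i j k : ι) : A :=
  ∑ l, (Q l i * d l (Q j k) + Q l j * d l (Q k i) + Q l k * d l (Q i j))

theorem jacobiator_rotate (d : ι → A →+ A) (Q : ι → ι → A) (i j k : ι) :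
    jacobiator d Q i j k = jacobiator d Q j k i :=
  sum_congr rfl fun _ _ => by ring

theorem jacobiator_self_right (d : ι → A →+ A) {Q : ι → ι → A} {i j : ι}
    (hji : Q j i = -Q i j) (hjj : Q j j = 0) : jacobiator d Q i j j = 0 :=
  sum_eq_zero fun _ _ => by
    rw [hji, hjj, map_neg, map_zero, mul_zero, zero_add, mul_neg, neg_add_cancel]

theorem sum_sum_mul_eq_zero_of_antisymm_of_symm [IsAddTorsionFree A] {P T : ι → ι → A}
    (hP : ∀ a b, P a b = -P b a) (hT : ∀ a b, T a b = T b a) :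
    ∑ a, ∑ b, P a b * T a b = 0 := by
  refine self_eq_neg.mp ?_
  calc ∑ a, ∑ b, P a b * T a b = ∑ b, ∑ a, P a b * T a b := sum_comm
    _ = -∑ a, ∑ b, P a b * T a b := by
      simp only [← sum_neg_distrib]
      exact sum_congr rfl fun b _ => sum_congr rfl fun a _ => by rw [hP, hT]; ring

variable (D : ι → Derivation S A A) (P : ι → ι → A)

def divergence (b : ι) : A :=
  ∑ a, D a (P a b)

def lieDeriv (X : ι → A) (i j : ι) : A :=
  ∑ l, (X l * D l (P i j) - P l j * D l (X i) - P i l * D l (X j))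

variable {D P}

theorem sum_deriv_row_eq_neg_divergence (hP : ∀ a b, P a b = -P b a) (b : ι) :
    ∑ a, D a (P b a) = -divergence D P b := by
  simp only [divergence, ← sum_neg_distrib, ← map_neg, ← hP]

theorem sum_sum_deriv_mul_deriv_eq_zero (hP : ∀ a b, P a b = -P b a) (i j : ι) :
    ∑ k, ∑ l, (D k (P l i) * D l (P j k) + D k (P l j) * D l (P k i)) = 0 := by
  calc _ = ∑ k, ∑ l, D k (P l i) * D l (P j k) + ∑ k, ∑ l, D k (P l j) * D l (P k i) := by
        simp only [sum_add_distrib]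
    _ = ∑ k, ∑ l, D k (P l i) * D l (P j k) + ∑ l, ∑ k, D k (P l j) * D l (P k i) := by
        rw [sum_comm (s := univ) (t := univ) (f := fun k l => D k (P l j) * D l (P k i))]
    _ = 0 := by
        simp only [← sum_add_distrib]
        refine sum_eq_zero fun k _ => sum_eq_zero fun l _ => ?_
        rw [hP k j, map_neg]
        ring

theorem sum_deriv_jacobiator [IsAddTorsionFree A] (hD : ∀ a b f, D a (D b f) = D b (D a f))
    (hP : ∀ a b, P a b = -P b a) (i j : ι) :
    ∑ k, D k (jacobiator (fun l => D l) P i j k) = -lieDeriv D P (divergence D P) i j := by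
  calc _ = ∑ k, ∑ l, (D k (P l i) * D l (P j k) + D k (P l j) * D l (P k i))
        + ∑ k, ∑ l, (P l i * D l (D k (P j k)) + P l j * D l (D k (P k i))
          + D k (P l k) * D l (P i j))
        + ∑ k, ∑ l, P l k * D k (D l (P i j)) := by
        simp only [jacobiator, map_sum, ← sum_add_distrib]
        refine sum_congr rfl fun k _ => sum_congr rfl fun l _ => ?_
        simp only [AddMonoidHom.coe_coe, map_add, Derivation.leibniz, smul_eq_mul, hD k l]
        ring
    _ = ∑ l, (P l i * D l (∑ k, D k (P j k)) + P l j * D l (∑ k, D k (P k i))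
          + (∑ k, D k (P l k)) * D l (P i j)) := by
        rw [sum_comm (f := fun k l => P l k * D k (D l (P i j))),
          sum_sum_deriv_mul_deriv_eq_zero hP,
          sum_sum_mul_eq_zero_of_antisymm_of_symm (T := fun a b => D b (D a (P i j))) hP
            fun a b => hD b a (P i j),
          zero_add, add_zero, sum_comm]
        simp only [map_sum, mul_sum, sum_mul, sum_add_distrib]
    _ = _ := by
        rw [lieDeriv, ← sum_neg_distrib]
        refine sum_congr rfl fun l _ => ?_
        rw [sum_deriv_row_eq_neg_divergence hP, sum_deriv_row_eq_neg_divergence hP, hP i l, map_neg]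
        simp only [divergence]
        ring

theorem lieDeriv_divergence_eq_zero [IsAddTorsionFree A]
    (hD : ∀ a b f, D a (D b f) = D b (D a f)) (hP : ∀ a b, P a b = -P b a)
    (hJ : ∀ i j k, jacobiator (fun l => D l) P i j k = 0) (i j : ι) :
    lieDeriv D P (divergence D P) i j = 0 := by
  simpa only [hJ, map_zero, sum_const_zero, zero_eq_neg] using sum_deriv_jacobiator hD hP i j

end Bivector

theorem AddMonoidAlgebra.single_finset_sum {α k G : Type*} [Semiring k] (s : Finset α) (m : G)
    (f : α → k) : single m (∑ x ∈ s, f x) = ∑ x ∈ s, single m (f x) :=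
  map_sum (singleAddHom m) f s

section Lift

variable (D : Fin n → Derivation ℝ R R)

theorem Dv_some_single (a : Fin n) (l : ℝ) (c : R) :
    Dv D (some a) (single l c) = single l (D a c) :=
  congrArg ofCoeff (Finsupp.mapRange_single (hf := map_zero _))

theorem Dv_none_single (l : ℝ) (c : R) :
    Dv D none (single l c) = single (l - 1) (l • c) :=
  congrArg ofCoeff (Finsupp.sum_single_index (by simp))

@[simps]
def dvAddHom (w : Option (Fin n)) : AddMonoidAlgebra R ℝ →+ AddMonoidAlgebra R ℝ where
  toFun := Dv D w
  map_zero' := by cases w <;> simp [Dv]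
  map_add' x y := by
    cases w with
    | some a => exact congrArg ofCoeff (Finsupp.mapRange_add (map_add _) _ _)
    | none => exact congrArg ofCoeff (Finsupp.sum_add_index' (by simp) (by simp [smul_add]))

variable {D} {P : Fin n → Fin n → R}

theorem jacobiator_lift_some_some_some (i j k : Fin n) :
    jacobiator (dvAddHom D) (Qhat D P) (some i) (some j) (some k)
      = single 0 (jacobiator (fun l => D l) P i j k) := by
  rw [jacobiator, Fintype.sum_option]
  simp only [Qhat, dvAddHom_apply, Dv_some_single, Dv_none_single, single_mul_single, zero_smul,
    single_zero, mul_zero, add_zero, zero_add, ← single_add, ← single_finset_sum]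
  rfl

theorem jacobiator_lift_some_some_none (hP : ∀ a b, P a b = -P b a) (i j : Fin n) :
    jacobiator (dvAddHom D) (Qhat D P) (some i) (some j) none
      = single 1 (lieDeriv D P (divergence D P) i j) := by
  rw [jacobiator, Fintype.sum_option]
  simp only [Qhat, dvAddHom_apply, Dv_some_single, Dv_none_single, ← single_neg,
    single_mul_single, zero_smul, one_smul, single_zero, mul_zero, add_zero, zero_add,
    ← single_add, ← single_finset_sum, sub_self]
  congr 1
  rw [neg_mul, neg_mul_neg, neg_add_eq_zero.mpr (mul_comm _ _), zero_add, lieDeriv]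
  refine sum_congr rfl fun l _ => ?_
  rw [hP i l, map_neg]
  simp only [divergence]
  ring

end Lift

theorem lift_of_Poisson_is_Poisson
    (D : Fin n → Derivation ℝ R R)
    (hD : ∀ a b (f : R), D a (D b f) = D b (D a f))
    (P : Fin n → Fin n → R)
    (hanti : ∀ a b, P a b = -P b a)
    (hJacobi : ∀ i j k : Fin n,
      ∑ l, (P l i * D l (P j k) + P l j * D l (P k i) + P l k * D l (P i j)) = 0) :
    ∀ i j k : Option (Fin n),
      ∑ l : Option (Fin n),
        (Qhat D P l i * Dv D l (Qhat D P j k)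
          + Qhat D P l j * Dv D l (Qhat D P k i)
          + Qhat D P l k * Dv D l (Qhat D P i j)) = 0 := by
  have : IsAddTorsionFree R :=
    letI : Module ℚ≥0 R := Module.compHom R (algebraMap ℚ≥0 ℝ)
    .of_module_nnrat R
  have base (i j k : Fin n) :
      jacobiator (dvAddHom D) (Qhat D P) (some i) (some j) (some k) = 0 := by
    rw [jacobiator_lift_some_some_some]
    exact (congrArg (single 0) (hJacobi i j k)).trans (single_zero 0)
  have mixed (i j : Fin n) : jacobiator (dvAddHom D) (Qhat D P) (some i) (some j) none = 0 := by
    rw [jacobiator_lift_some_some_none hanti, lieDeriv_divergence_eq_zero hD hanti hJacobi,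
      single_zero]
  have two_t (i : Fin n) : jacobiator (dvAddHom D) (Qhat D P) (some i) none none = 0 :=
    jacobiator_self_right _ rfl rfl
  intro i j k
  change jacobiator (dvAddHom D) (Qhat D P) i j k = 0
  match i, j, k with
  | some i, some j, some k => exact base i j k
  | some i, some j, none => exact mixed i j
  | some i, none, some k => rw [jacobiator_rotate, jacobiator_rotate]; exact mixed k i
  | none, some j, some k => rw [jacobiator_rotate]; exact mixed j k
  | some i, none, none => exact two_t i
  | none, some j, none => rw [jacobiator_rotate]; exact two_t j
  | none, none, some k => rw [jacobiator_rotate, jacobiator_rotate]; exact two_t k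
  | none, none, none => exact jacobiator_self_right _ neg_zero.symm rfl

end
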